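/- For every real a with 0 < a < q^{−1} and all n, m ∈ ℕ, the orthogonality relation Σ_{x∈ℕ} p̄_n(q^x; a; q) p̄_m(q^x; a; q) = δ_{nm} holds (the sum over x converging); i.e. it equals 1 if n = m and 0 otherwise. -/

import Mathlib

open scoped BigOperators

/-- The finite q-Pochhammer symbol `(a;q)_n`. -/
noncomputable def qPoch (q a : ℝ) (n : ℕ) : ℝ := ∏ k ∈ Finset.range n, (1 - a * q ^ k)

/-- The infinite q-Pochhammer symbol `(a;q)_∞`. -/
noncomputable def qPochInf (q a : ℝ) : ℝ := ∏' k : ℕ, (1 - a * q ^ k)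

/-- Jackson's third q-Bessel function `J_ν(x;q)` for real order `ν`. -/
noncomputable def qBessel (q ν x : ℝ) : ℝ :=
  x ^ (ν / 2) * (qPochInf q (q ^ (ν + 1)) / qPochInf q q) *
    ∑' k : ℕ, (-1 : ℝ) ^ k * q ^ (k * (k - 1) / 2) * (q * x) ^ k /
      (qPoch q q k * qPoch q (q ^ (ν + 1)) k)

/-- Jackson's third q-Bessel function of integer order, extended to negative
integer orders by `J_{-n}(x;q) = (-1)^n q^{n/2} J_n(x q^n; q)`. -/
noncomputable def qBesselZ (q : ℝ) (ν : ℤ) (x : ℝ) : ℝ :=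
  if 0 ≤ ν then qBessel q (ν : ℝ) x
  else (-1 : ℝ) ^ (-ν).toNat * q ^ (((-ν).toNat : ℝ) / 2) *
    qBessel q ((-ν).toNat : ℝ) (x * q ^ (-ν).toNat)

/-- The Wall polynomial `p_n(q^y; a; q)`. -/
noncomputable def wallP (q : ℝ) (n : ℕ) (y a : ℝ) : ℝ :=
  ∑ k ∈ Finset.range (n + 1),
    qPoch q (q ^ (-(n : ℤ))) k * q ^ ((y + 1) * (k : ℝ)) / (qPoch q q k * qPoch q (a * q) k)

/-- The normalized Wall function `p̄_n(q^y; a; q)`. -/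
noncomputable def wallBar (q : ℝ) (n y : ℕ) (a : ℝ) : ℝ :=
  (-1 : ℝ) ^ (n + y) *
    Real.sqrt ((a * q) ^ ((y : ℤ) - (n : ℤ)) * qPochInf q (a * q) * qPoch q (a * q) n /
      (qPoch q q n * qPoch q q y)) *
    wallP q n (y : ℝ) a

/-!
The weight `w(x) = (aq;q)_∞ (aq)^x / (q;q)_x` has the moments `∑_x w(x) q^{ix} = (aq;q)_i`, by
Euler's identity `∑_x t^x / (q;q)_x = 1 / (t;q)_∞`, itself obtained by iterating
`(1 - t) e_q(t) = e_q(qt)`. Expanding `p_n(q^x) = ∑_j c_j q^{(x+1)j}` and splitting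
`(aq;q)_{j+k} = (aq;q)_j (aq^{j+1};q)_k`, the moment `∑_x w(x) p_n(q^x) q^{kx}` becomes a finite
sum; expanding `(aq^{j+1};q)_k` by Rothe's formula turns it into a combination of terminating
q-binomial sums `∑_j (q^{-n};q)_j q^{(s+1)j} / (q;q)_j = (q^{s+1-n};q)_n` with `s ≤ k`. These vanish
for `s < n`, so `p_n` is orthogonal to all polynomials in `q^x` of lower degree, and pairing with
the leading term of `p_n` gives the norm `(aq)^n (q;q)_n / (aq;q)_n`. The factor in front of
`p_n` in `p̄_n` is, up to sign, the square root of the weight divided by this norm.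
-/

open Filter Topology

lemma qPoch_zero (q a : ℝ) : qPoch q a 0 = 1 := Finset.prod_range_zero _

lemma qPoch_succ (q a : ℝ) (n : ℕ) : qPoch q a (n + 1) = qPoch q a n * (1 - a * q ^ n) :=
  Finset.prod_range_succ _ n

lemma qPoch_add (q a : ℝ) (j k : ℕ) :
    qPoch q a (j + k) = qPoch q a j * qPoch q (a * q ^ j) k := by
  simp only [qPoch, Finset.prod_range_add, pow_add, mul_assoc]

lemma qPoch_pos {q a : ℝ} (hq0 : 0 ≤ q) (hq1 : q ≤ 1) (ha : a < 1) (n : ℕ) :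
    0 < qPoch q a n := by
  refine Finset.prod_pos fun k _ => ?_
  have h0 : 0 ≤ q ^ k := pow_nonneg hq0 k
  have h1 : q ^ k ≤ 1 := pow_le_one₀ hq0 hq1
  rcases le_or_gt 0 a with ha0 | ha0 <;> nlinarith

lemma Nat.succ_choose_two (j : ℕ) : (j + 1).choose 2 = j.choose 2 + j := by
  simp [Nat.choose_succ_succ, add_comm]

lemma Nat.choose_two_mul_two_add_self (n : ℕ) : n.choose 2 * 2 + n = n * n := by
  induction n with
  | zero => rfl
  | succ n ih => rw [Nat.succ_choose_two]; linarith

def gaussBinom (q : ℝ) : ℕ → ℕ → ℝ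
  | _, 0 => 1
  | 0, _ + 1 => 0
  | n + 1, j + 1 => gaussBinom q n (j + 1) + q ^ (n - j) * gaussBinom q n j

lemma gaussBinom_zero_right (q : ℝ) (n : ℕ) : gaussBinom q n 0 = 1 := by
  cases n <;> rfl

lemma gaussBinom_of_lt (q : ℝ) {n j : ℕ} (h : n < j) : gaussBinom q n j = 0 := by
  induction n generalizing j with
  | zero => obtain ⟨j, rfl⟩ := Nat.exists_eq_add_of_lt h; rfl
  | succ n ih =>
    obtain ⟨j, rfl⟩ : ∃ i, j = i + 1 := Nat.exists_eq_succ_of_ne_zero (by omega)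
    simp only [gaussBinom, ih (show n < j + 1 by omega), ih (show n < j by omega), mul_zero,
      add_zero]

lemma gaussBinom_self (q : ℝ) (n : ℕ) : gaussBinom q n n = 1 := by
  induction n with
  | zero => rfl
  | succ n ih => simp [gaussBinom, gaussBinom_of_lt, ih]

lemma gaussBinom_mul_qPoch_mul_qPoch (q : ℝ) {n j : ℕ} (hj : j ≤ n) :
    gaussBinom q n j * (qPoch q q j * qPoch q q (n - j)) = qPoch q q n := by
  induction n generalizing j with
  | zero =>
    obtain rfl : j = 0 := by omega
    simp [gaussBinom_zero_right, qPoch_zero]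
  | succ n ih =>
    rcases j with _ | j
    · simp [gaussBinom_zero_right, qPoch_zero]
    rcases hj.lt_or_eq with hj | hj
    · obtain ⟨d, rfl⟩ := Nat.exists_eq_add_of_le (show j + 1 ≤ n by omega)
      have h1 := ih (j := j + 1) (by omega)
      have h2 := ih (j := j) (by omega)
      rw [show j + 1 + d - (j + 1) = d by omega, qPoch_succ q q j] at h1
      rw [show j + 1 + d - j = d + 1 by omega, qPoch_succ q q d] at h2
      rw [show j + 1 + d + 1 - (j + 1) = d + 1 by omega, gaussBinom,
        show j + 1 + d - j = d + 1 by omega, qPoch_succ q q (j + 1 + d), qPoch_succ q q j,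
        qPoch_succ q q d]
      linear_combination (1 - q * q ^ d) * h1 + q ^ (d + 1) * (1 - q * q ^ j) * h2
    · obtain rfl : j = n := by omega
      simp [gaussBinom_self, qPoch_zero]

/-- Rothe's q-binomial formula. -/
theorem qPoch_eq_sum_gaussBinom (q z : ℝ) (n : ℕ) :
    qPoch q z n =
      ∑ j ∈ Finset.range (n + 1), gaussBinom q n j * (-1) ^ j * q ^ j.choose 2 * z ^ j := by
  induction n with
  | zero => simp [qPoch_zero, gaussBinom_zero_right]
  | succ n ih =>
    set c : ℕ → ℝ := fun j => gaussBinom q n j * (-1) ^ j * q ^ j.choose 2 * z ^ j with hc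
    have hpascal : ∀ j ∈ Finset.range (n + 1),
        gaussBinom q (n + 1) (j + 1) * (-1) ^ (j + 1) * q ^ (j + 1).choose 2 * z ^ (j + 1) =
          c (j + 1) - z * q ^ n * c j := by
      intro j hj
      have hq : q ^ (n - j) * q ^ (j + 1).choose 2 = q ^ n * q ^ j.choose 2 := by
        rw [← pow_add, ← pow_add, Nat.succ_choose_two]
        congr 1
        have := Finset.mem_range.1 hj
        omega
      simp only [hc, gaussBinom]
      linear_combination (-(-1) ^ j * z ^ (j + 1) * gaussBinom q n j) * hq
    have hlast : c (n + 1) = 0 := by simp [hc, gaussBinom_of_lt]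
    have hfirst : c 0 = 1 := by simp [hc, gaussBinom_zero_right]
    calc qPoch q z (n + 1) = (∑ j ∈ Finset.range (n + 1), c j) * (1 - z * q ^ n) := by
          rw [qPoch_succ, ih]
      _ = (∑ j ∈ Finset.range (n + 2), c j) - z * q ^ n * ∑ j ∈ Finset.range (n + 1), c j := by
          rw [Finset.sum_range_succ _ (n + 1), hlast]
          ring
      _ = 1 + ∑ j ∈ Finset.range (n + 1), (c (j + 1) - z * q ^ n * c j) := by
          rw [Finset.sum_range_succ', hfirst, Finset.sum_sub_distrib, Finset.mul_sum]
          ring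
      _ = _ := by
          rw [Finset.sum_range_succ' _ (n + 1), ← Finset.sum_congr rfl hpascal]
          simp [gaussBinom_zero_right]
          ring

lemma qPoch_zpow_neg_mul_qPoch {q : ℝ} (hq : q ≠ 0) {n j : ℕ} (hj : j ≤ n) :
    qPoch q (q ^ (-(n : ℤ))) j * qPoch q q (n - j) * q ^ (n * j) =
      (-1) ^ j * q ^ j.choose 2 * qPoch q q n := by
  induction j with
  | zero => simp [qPoch_zero]
  | succ j ih =>
    obtain ⟨d, rfl⟩ := Nat.exists_eq_add_of_le hj
    have ih := ih (by omega)
    rw [show j + 1 + d - j = d + 1 by omega, qPoch_succ q q d] at ih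
    have hflip : (1 - q ^ (-((j + 1 + d : ℕ) : ℤ)) * q ^ j) * q ^ (j + 1 + d) =
        -(q ^ j * (1 - q * q ^ d)) := by
      have h : q ^ (-((j + 1 + d : ℕ) : ℤ)) * q ^ (j + 1 + d) = 1 := by
        rw [zpow_neg, zpow_natCast, inv_mul_cancel₀ (pow_ne_zero _ hq)]
      linear_combination (-q ^ j) * h
    rw [show j + 1 + d - (j + 1) = d by omega, qPoch_succ, mul_add_one, pow_add,
      Nat.succ_choose_two, pow_add, pow_succ (-1 : ℝ)]
    linear_combination (-q ^ j) * ih +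
      (qPoch q (q ^ (-((j + 1 + d : ℕ) : ℤ))) j * qPoch q q d * q ^ ((j + 1 + d) * j)) * hflip

/-- The terminating q-binomial theorem `₁φ₀(q⁻ⁿ; –; q, z) = (z q⁻ⁿ; q)ₙ`. -/
theorem sum_qPoch_zpow_neg_div_mul_pow {q : ℝ} (hq0 : 0 < q) (hq1 : q < 1) (n : ℕ) (z : ℝ) :
    ∑ j ∈ Finset.range (n + 1), qPoch q (q ^ (-(n : ℤ))) j / qPoch q q j * z ^ j =
      qPoch q (z * q ^ (-(n : ℤ))) n := by
  rw [qPoch_eq_sum_gaussBinom]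
  refine Finset.sum_congr rfl fun j hj => ?_
  have hjn : j ≤ n := Nat.lt_succ_iff.1 (Finset.mem_range.1 hj)
  have hA := qPoch_zpow_neg_mul_qPoch hq0.ne' hjn
  have hB := gaussBinom_mul_qPoch_mul_qPoch q hjn
  have hPj := (qPoch_pos hq0.le hq1.le hq1 j).ne'
  have hPnj := (qPoch_pos hq0.le hq1.le hq1 (n - j)).ne'
  have hqn : q ^ (n * j) * (q ^ (-(n : ℤ))) ^ j = 1 := by
    rw [← zpow_natCast q, ← zpow_natCast (q ^ _), ← zpow_mul, ← zpow_add₀ hq0.ne']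
    push_cast
    ring_nf
    exact zpow_zero q
  rw [mul_pow, div_mul_eq_mul_div, div_eq_iff hPj]
  apply mul_right_cancel₀ (mul_ne_zero hPnj (pow_ne_zero (n * j) hq0.ne'))
  linear_combination z ^ j * hA
    - (-1) ^ j * q ^ j.choose 2 * z ^ j * (q ^ (-(n : ℤ))) ^ j * q ^ (n * j) * hB
    - (-1) ^ j * q ^ j.choose 2 * z ^ j * qPoch q q n * hqn

lemma qPoch_pow_succ_mul_zpow_neg_eq_zero {q : ℝ} (hq : q ≠ 0) {s n : ℕ} (hs : s < n) :
    qPoch q (q ^ (s + 1) * q ^ (-(n : ℤ))) n = 0 := by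
  refine Finset.prod_eq_zero (Finset.mem_range.2 (show n - (s + 1) < n by omega)) ?_
  rw [← zpow_natCast, ← zpow_natCast q (n - (s + 1)), ← zpow_add₀ hq, ← zpow_add₀ hq]
  rw [Nat.cast_sub (show s + 1 ≤ n by omega), Nat.cast_succ,
    show (s : ℤ) + 1 + -n + (n - (s + 1)) = 0 by ring, zpow_zero, sub_self]

noncomputable def qExp (q t : ℝ) : ℝ := ∑' x : ℕ, t ^ x / qPoch q q x

section qExp

variable {q t : ℝ} (hq0 : 0 < q) (hq1 : q < 1) (ht0 : 0 < t) (ht1 : t < 1)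
include hq0 hq1 ht0 ht1

lemma summable_pow_div_qPoch : Summable fun x : ℕ => t ^ x / qPoch q q x := by
  have hP x := qPoch_pos hq0.le hq1.le hq1 x
  refine summable_of_ratio_test_tendsto_lt_one ht1 (Eventually.of_forall fun x => by
    have := hP x; positivity) ?_
  have hratio x : ‖t ^ (x + 1) / qPoch q q (x + 1)‖ / ‖t ^ x / qPoch q q x‖ =
      t / (1 - q * q ^ x) := by
    have := hP x
    have := hP (x + 1)
    rw [Real.norm_of_nonneg (by positivity), Real.norm_of_nonneg (by positivity), qPoch_succ]
    field_simp
    ring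
  have hlim : Tendsto (fun x : ℕ => t / (1 - q * q ^ x)) atTop (𝓝 (t / (1 - q * 0))) :=
    tendsto_const_nhds.div (tendsto_const_nhds.sub
      ((tendsto_pow_atTop_nhds_zero_of_lt_one hq0.le hq1).const_mul q)) (by simp)
  simpa [← hratio] using hlim

lemma hasSum_qExp : HasSum (fun x : ℕ => t ^ x / qPoch q q x) (qExp q t) :=
  (summable_pow_div_qPoch hq0 hq1 ht0 ht1).hasSum

lemma one_sub_mul_qExp : (1 - t) * qExp q t = qExp q (q * t) := by
  have hqt0 : 0 < q * t := mul_pos hq0 ht0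
  have hqt1 : q * t < 1 := by nlinarith
  have hshift {s : ℝ} (h : HasSum (fun x : ℕ => s ^ x / qPoch q q x) (qExp q s)) :
      HasSum (fun x : ℕ => s ^ (x + 1) / qPoch q q (x + 1)) (qExp q s - 1) := by
    simpa [qPoch_zero] using (hasSum_nat_add_iff' 1).2 h
  have hstep x : t ^ (x + 1) / qPoch q q (x + 1) - (q * t) ^ (x + 1) / qPoch q q (x + 1) =
      t * (t ^ x / qPoch q q x) := by
    have := qPoch_pos hq0.le hq1.le hq1 x
    have : q * q ^ x < 1 := by rw [← pow_succ']; exact pow_lt_one₀ hq0.le hq1 (by omega)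
    rw [qPoch_succ]
    field_simp [show 1 - q * q ^ x ≠ 0 by linarith]
    ring
  have h := (hshift (hasSum_qExp hq0 hq1 ht0 ht1)).sub (hshift (hasSum_qExp hq0 hq1 hqt0 hqt1))
  simp only [hstep] at h
  linarith [h.unique ((hasSum_qExp hq0 hq1 ht0 ht1).mul_left t)]

lemma qExp_mul_qPoch (N : ℕ) : qExp q t * qPoch q t N = qExp q (q ^ N * t) := by
  induction N with
  | zero => simp [qPoch_zero]
  | succ N ih =>
    have hN0 : 0 < q ^ N * t := by positivity
    have hN1 : q ^ N * t < 1 := by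
      nlinarith [pow_le_one₀ hq0.le hq1.le (n := N)]
    rw [qPoch_succ, ← mul_assoc, ih, pow_succ', mul_assoc, ← one_sub_mul_qExp hq0 hq1 hN0 hN1]
    ring

lemma tendsto_qExp_pow_mul : Tendsto (fun N : ℕ => qExp q (q ^ N * t)) atTop (𝓝 1) := by
  have hP x := qPoch_pos hq0.le hq1.le hq1 x
  have hlim x : Tendsto (fun N : ℕ => (q ^ N * t) ^ x / qPoch q q x) atTop
      (𝓝 ((0 * t) ^ x / qPoch q q x)) :=
    (((tendsto_pow_atTop_nhds_zero_of_lt_one hq0.le hq1).mul_const t).pow x).div_const _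
  have hbound : ∀ N : ℕ, ∀ x : ℕ, ‖(q ^ N * t) ^ x / qPoch q q x‖ ≤ t ^ x / qPoch q q x := by
    intro N x
    have := hP x
    rw [Real.norm_of_nonneg (by positivity)]
    gcongr
    exact mul_le_of_le_one_left ht0.le (pow_le_one₀ hq0.le hq1.le)
  have h := tendsto_tsum_of_dominated_convergence (summable_pow_div_qPoch hq0 hq1 ht0 ht1) hlim
    (Eventually.of_forall hbound)
  rwa [tsum_eq_single 0 fun x hx => by simp [hx], pow_zero, qPoch_zero, div_one] at h

lemma qPochInf_mul_qExp : qPochInf q t * qExp q t = 1 := by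
  have hmul : Multipliable fun k : ℕ => 1 - t * q ^ k := by
    simpa [sub_eq_add_neg] using Real.multipliable_one_add_of_summable
      ((summable_geometric_of_lt_one hq0.le hq1).mul_left (-t))
  have hprod : Tendsto (fun N => qExp q t * qPoch q t N) atTop (𝓝 (qExp q t * qPochInf q t)) :=
    hmul.hasProd.tendsto_prod_nat.const_mul _
  simp only [qExp_mul_qPoch hq0 hq1 ht0 ht1] at hprod
  rw [mul_comm, tendsto_nhds_unique hprod (tendsto_qExp_pow_mul hq0 hq1 ht0 ht1)]

lemma qPochInf_pos : 0 < qPochInf q t := by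
  have hE : 0 < qExp q t :=
    (summable_pow_div_qPoch hq0 hq1 ht0 ht1).tsum_pos
      (fun x => (div_pos (pow_pos ht0 x) (qPoch_pos hq0.le hq1.le hq1 x)).le) 0
      (by simp [qPoch_zero])
  rw [eq_inv_of_mul_eq_one_left (qPochInf_mul_qExp hq0 hq1 ht0 ht1)]
  exact inv_pos.2 hE

lemma hasSum_pow_div_qPoch_mul_pow (i : ℕ) :
    HasSum (fun x : ℕ => t ^ x / qPoch q q x * (q ^ x) ^ i) (qExp q t * qPoch q t i) := by
  have hi1 : q ^ i * t < 1 := by nlinarith [pow_le_one₀ hq0.le hq1.le (n := i)]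
  rw [qExp_mul_qPoch hq0 hq1 ht0 ht1]
  convert hasSum_qExp hq0 hq1 (by positivity) hi1 using 2 with x
  rw [mul_pow, ← pow_mul, ← pow_mul, mul_comm i x]
  ring

end qExp

noncomputable def wallCoeff (q a : ℝ) (n j : ℕ) : ℝ :=
  qPoch q (q ^ (-(n : ℤ))) j / (qPoch q q j * qPoch q (a * q) j)

lemma wallP_natCast (q a : ℝ) (n x : ℕ) :
    wallP q n x a = ∑ j ∈ Finset.range (n + 1), wallCoeff q a n j * q ^ j * (q ^ x) ^ j := by
  refine Finset.sum_congr rfl fun j _ => ?_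
  rw [show ((x : ℝ) + 1) * j = ((j + x * j : ℕ) : ℝ) by push_cast; ring, Real.rpow_natCast,
    pow_add, pow_mul, wallCoeff]
  ring

noncomputable def wallMoment (q a : ℝ) (n k : ℕ) : ℝ :=
  ∑ j ∈ Finset.range (n + 1),
    qPoch q (q ^ (-(n : ℤ))) j / qPoch q q j * q ^ j * qPoch q (a * q * q ^ j) k

noncomputable def wallWeight (q a : ℝ) (x : ℕ) : ℝ :=
  qPochInf q (a * q) * (a * q) ^ x / qPoch q q x

noncomputable def wallNorm (q a : ℝ) (n : ℕ) : ℝ :=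
  (a * q) ^ n * qPoch q q n / qPoch q (a * q) n

section Wall

variable {q a : ℝ} (hq0 : 0 < q) (hq1 : q < 1)
include hq0 hq1

lemma wallMoment_eq (n k : ℕ) :
    wallMoment q a n k = ∑ s ∈ Finset.range (k + 1),
      gaussBinom q k s * (-1) ^ s * q ^ s.choose 2 * (a * q) ^ s *
        qPoch q (q ^ (s + 1) * q ^ (-(n : ℤ))) n := by
  have hrothe (j : ℕ) := qPoch_eq_sum_gaussBinom q (a * q * q ^ j) k
  simp only [wallMoment, hrothe, Finset.mul_sum]
  rw [Finset.sum_comm]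
  refine Finset.sum_congr rfl fun s _ => ?_
  rw [← sum_qPoch_zpow_neg_div_mul_pow hq0 hq1, Finset.mul_sum]
  refine Finset.sum_congr rfl fun j _ => ?_
  rw [mul_pow, mul_pow, pow_succ, mul_pow, ← pow_mul, ← pow_mul, mul_comm j s]
  ring

lemma wallMoment_eq_zero {n k : ℕ} (hkn : k < n) : wallMoment q a n k = 0 := by
  rw [wallMoment_eq hq0 hq1]
  refine Finset.sum_eq_zero fun s hs => ?_
  have hsn : s < n := by have := Finset.mem_range.1 hs; omega
  rw [qPoch_pow_succ_mul_zpow_neg_eq_zero hq0.ne' hsn, mul_zero]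

lemma wallMoment_self (n : ℕ) :
    wallMoment q a n n = (-1) ^ n * q ^ n.choose 2 * (a * q) ^ n * qPoch q q n := by
  have hq : q ^ (n + 1) * q ^ (-(n : ℤ)) = q := by
    rw [← zpow_natCast, ← zpow_add₀ hq0.ne']
    simp
  rw [wallMoment_eq hq0 hq1, Finset.sum_range_succ, Finset.sum_eq_zero fun s hs => by
    rw [qPoch_pow_succ_mul_zpow_neg_eq_zero hq0.ne' (Finset.mem_range.1 hs), mul_zero],
    gaussBinom_self, hq]
  ring

variable (haq : a * q < 1)
include haq

lemma wallCoeff_self_mul_wallMoment_self (n : ℕ) :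
    wallCoeff q a n n * q ^ n * wallMoment q a n n = wallNorm q a n := by
  have hlead := qPoch_zpow_neg_mul_qPoch hq0.ne' (le_refl n)
  rw [Nat.sub_self, qPoch_zero, mul_one] at hlead
  have hexp : q ^ (n * n) = q ^ n.choose 2 * q ^ n.choose 2 * q ^ n := by
    rw [← Nat.choose_two_mul_two_add_self, pow_add, pow_mul]
    ring
  have hPn := (qPoch_pos hq0.le hq1.le hq1 n).ne'
  have hPan := (qPoch_pos hq0.le hq1.le haq n).ne'
  have hsign : ((-1 : ℝ) ^ n) * (-1) ^ n = 1 := by rw [← mul_pow]; simp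
  rw [hexp] at hlead
  rw [wallMoment_self hq0 hq1, wallCoeff, wallNorm]
  field_simp
  apply mul_left_cancel₀ (pow_ne_zero (n.choose 2) hq0.ne')
  linear_combination (-1) ^ n * (a * q) ^ n * hlead +
    q ^ n.choose 2 * qPoch q q n * (a * q) ^ n * hsign

variable (ha0 : 0 < a)
include ha0

lemma hasSum_wallP_mul_pow (n k : ℕ) :
    HasSum (fun x : ℕ => (a * q) ^ x / qPoch q q x * wallP q n x a * (q ^ x) ^ k)
      (qExp q (a * q) * wallMoment q a n k) := by
  have haq0 : 0 < a * q := mul_pos ha0 hq0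
  have hterm (x : ℕ) : (a * q) ^ x / qPoch q q x * wallP q n x a * (q ^ x) ^ k =
      ∑ j ∈ Finset.range (n + 1),
        wallCoeff q a n j * q ^ j * ((a * q) ^ x / qPoch q q x * (q ^ x) ^ (j + k)) := by
    rw [wallP_natCast, Finset.mul_sum, Finset.sum_mul]
    refine Finset.sum_congr rfl fun j _ => ?_
    ring
  have hval : qExp q (a * q) * wallMoment q a n k = ∑ j ∈ Finset.range (n + 1),
      wallCoeff q a n j * q ^ j * (qExp q (a * q) * qPoch q (a * q) (j + k)) := by
    rw [wallMoment, Finset.mul_sum]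
    refine Finset.sum_congr rfl fun j _ => ?_
    have hPj := (qPoch_pos hq0.le hq1.le hq1 j).ne'
    have hPaj := (qPoch_pos hq0.le hq1.le haq j).ne'
    rw [qPoch_add, wallCoeff]
    field_simp
  simp only [hterm, hval]
  exact hasSum_sum fun j _ =>
    (hasSum_pow_div_qPoch_mul_pow hq0 hq1 haq0 haq (j + k)).mul_left (wallCoeff q a n j * q ^ j)

lemma hasSum_wallP_mul_wallP_of_le {m n : ℕ} (hmn : m ≤ n) :
    HasSum (fun x : ℕ => (a * q) ^ x / qPoch q q x * wallP q n x a * wallP q m x a)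
      (if n = m then qExp q (a * q) * wallNorm q a n else 0) := by
  have hterm (x : ℕ) : (a * q) ^ x / qPoch q q x * wallP q n x a * wallP q m x a =
      ∑ k ∈ Finset.range (m + 1),
        wallCoeff q a m k * q ^ k * ((a * q) ^ x / qPoch q q x * wallP q n x a * (q ^ x) ^ k) := by
    rw [wallP_natCast q a m, Finset.mul_sum]
    refine Finset.sum_congr rfl fun k _ => ?_
    ring
  suffices hval : ∑ k ∈ Finset.range (m + 1),
      wallCoeff q a m k * q ^ k * (qExp q (a * q) * wallMoment q a n k) =
        if n = m then qExp q (a * q) * wallNorm q a n else 0 by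
    simp only [hterm, ← hval]
    exact hasSum_sum fun k _ =>
      (hasSum_wallP_mul_pow hq0 hq1 haq ha0 n k).mul_left (wallCoeff q a m k * q ^ k)
  rcases hmn.lt_or_eq with hlt | rfl
  · rw [if_neg hlt.ne', Finset.sum_eq_zero fun k hk => by
      rw [wallMoment_eq_zero hq0 hq1 (lt_of_lt_of_le (Finset.mem_range.1 hk) hlt),
        mul_zero, mul_zero]]
  · rw [if_pos rfl, Finset.sum_range_succ, Finset.sum_eq_zero fun k hk => by
      rw [wallMoment_eq_zero hq0 hq1 (Finset.mem_range.1 hk), mul_zero, mul_zero],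
      zero_add, mul_left_comm, wallCoeff_self_mul_wallMoment_self hq0 hq1 haq]

lemma hasSum_wallWeight_mul_wallP_mul_wallP (n m : ℕ) :
    HasSum (fun x : ℕ => wallWeight q a x * wallP q n x a * wallP q m x a)
      (if n = m then wallNorm q a n else 0) := by
  have hinf := qPochInf_mul_qExp hq0 hq1 (mul_pos ha0 hq0) haq
  have hsym : HasSum (fun x : ℕ => (a * q) ^ x / qPoch q q x * wallP q n x a * wallP q m x a)
      (if n = m then qExp q (a * q) * wallNorm q a n else 0) := by
    rcases le_total m n with hmn | hnm
    · exact hasSum_wallP_mul_wallP_of_le hq0 hq1 haq ha0 hmn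
    · have h := hasSum_wallP_mul_wallP_of_le hq0 hq1 haq ha0 hnm
      obtain rfl | hne := eq_or_ne n m
      · exact h
      rw [if_neg hne.symm] at h
      rw [if_neg hne]
      convert h using 2 with x
      ring
  have hfun : (fun x : ℕ => wallWeight q a x * wallP q n x a * wallP q m x a) =
      fun x => qPochInf q (a * q) * ((a * q) ^ x / qPoch q q x * wallP q n x a * wallP q m x a) := by
    ext x
    rw [wallWeight]
    ring
  have hval : (if n = m then wallNorm q a n else 0) =
      qPochInf q (a * q) * if n = m then qExp q (a * q) * wallNorm q a n else 0 := by
    split_ifs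
    · rw [← mul_assoc, hinf, one_mul]
    · rw [mul_zero]
  rw [hfun, hval]
  exact hsym.mul_left _

lemma wallNorm_pos (n : ℕ) : 0 < wallNorm q a n :=
  div_pos (mul_pos (pow_pos (mul_pos ha0 hq0) n) (qPoch_pos hq0.le hq1.le hq1 n))
    (qPoch_pos hq0.le hq1.le haq n)

lemma wallBar_eq (n x : ℕ) :
    wallBar q n x a =
      (-1) ^ (n + x) * √(wallWeight q a x / wallNorm q a n) * wallP q n x a := by
  have haq0 : a * q ≠ 0 := (mul_pos ha0 hq0).ne'
  have hPn := (qPoch_pos hq0.le hq1.le hq1 n).ne'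
  have hPx := (qPoch_pos hq0.le hq1.le hq1 x).ne'
  have hPan := (qPoch_pos hq0.le hq1.le haq n).ne'
  rw [wallBar, wallWeight, wallNorm, zpow_sub₀ haq0, zpow_natCast, zpow_natCast]
  congr 3
  field_simp

lemma wallBar_mul_wallBar (n m x : ℕ) :
    wallBar q n x a * wallBar q m x a =
      (-1) ^ (n + m) / (√(wallNorm q a n) * √(wallNorm q a m)) *
        (wallWeight q a x * wallP q n x a * wallP q m x a) := by
  have hW : 0 ≤ wallWeight q a x :=
    div_nonneg (mul_nonneg (qPochInf_pos hq0 hq1 (mul_pos ha0 hq0) haq).le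
      (pow_pos (mul_pos ha0 hq0) x).le) (qPoch_pos hq0.le hq1.le hq1 x).le
  have hsign : (-1 : ℝ) ^ (n + x) * (-1) ^ (m + x) = (-1) ^ (n + m) := by
    rw [← pow_add, show n + x + (m + x) = n + m + 2 * x by ring, pow_add, pow_mul]
    simp
  rw [wallBar_eq hq0 hq1 haq ha0, wallBar_eq hq0 hq1 haq ha0,
    Real.sqrt_div' _ (wallNorm_pos hq0 hq1 haq ha0 n).le,
    Real.sqrt_div' _ (wallNorm_pos hq0 hq1 haq ha0 m).le]
  linear_combination (√(wallWeight q a x) * √(wallWeight q a x) * wallP q n x a * wallP q m x a /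
      (√(wallNorm q a n) * √(wallNorm q a m))) * hsign +
    ((-1) ^ (n + m) * wallP q n x a * wallP q m x a / (√(wallNorm q a n) * √(wallNorm q a m))) *
      Real.mul_self_sqrt hW

end Wall

/-- Orthogonality relations for the normalized Wall functions. -/
theorem wallBar_orthogonality (q : ℝ) (hq0 : 0 < q) (hq1 : q < 1)
    (a : ℝ) (ha0 : 0 < a) (ha1 : a < q⁻¹) (n m : ℕ) :
    HasSum (fun x : ℕ => wallBar q n x a * wallBar q m x a)
      (if n = m then 1 else 0) := by
  have haq : a * q < 1 := (lt_mul_inv_iff₀ hq0).1 (by rwa [one_mul])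
  have hN := wallNorm_pos hq0 hq1 haq ha0
  have hval : (if n = m then 1 else 0 : ℝ) =
      (-1) ^ (n + m) / (√(wallNorm q a n) * √(wallNorm q a m)) *
        if n = m then wallNorm q a n else 0 := by
    split_ifs with hnm
    · subst hnm
      rw [← two_mul, pow_mul, neg_one_sq, one_pow, Real.mul_self_sqrt (hN n).le,
        one_div_mul_cancel (hN n).ne']
    · rw [mul_zero]
  simp only [wallBar_mul_wallBar hq0 hq1 haq ha0 n m, hval]
  exact (hasSum_wallWeight_mul_wallP_mul_wallP hq0 hq1 haq ha0 n m).mul_left _
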